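/- Let X be a set of words that is a code (i.e., the submonoid it generates is free with basis X; equivalently, concatenation from lists over X is injective). Let w₁, w₂ be lists over X and z a word not in the submonoid generated by X, with z · concat w₁ = concat w₂ · z. Then for every n and every prefix v₁ of w₁^n and prefix v₂ of w₂^n (as lists), z · concat v₁ ≠ concat v₂. -/

import Mathlib

/-! The relation `z · concat w₁ = concat w₂ · z` passes to the powers `w₁^n`, `w₂^n`. Write
`w₁^n = v₁ r₁` and `w₂^n = v₂ r₂`; if `z · concat v₁ = concat v₂`, cancelling gives
`concat r₁ = concat r₂ · z`, so `r₁ v₁` and `r₂ v₂` are two factorizations of the same word. As `X`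
is a code they coincide as lists, which forces `r₁ = r₂ t` with `concat t = z`, i.e. `z ∈ ⟨X⟩`. -/

/-- `wpow u n` is the `n`-fold concatenation of `u` with itself (here used on lists of words). -/
def wpow {α : Type*} (u : List α) (n : ℕ) : List α := (List.replicate n u).flatten

section

variable {α : Type*}

def IsCode (X : Set (List α)) : Prop :=
  ∀ l₁ l₂ : List (List α), (∀ a ∈ l₁, a ∈ X) → (∀ a ∈ l₂, a ∈ X) →
    l₁.flatten = l₂.flatten → l₁ = l₂

theorem wpow_succ (u : List α) (n : ℕ) : wpow u (n + 1) = u ++ wpow u n := by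
  simp [wpow, List.replicate_succ]

theorem mem_of_mem_wpow {u : List α} {n : ℕ} {a : α} (h : a ∈ wpow u n) : a ∈ u := by
  obtain ⟨l, hl, ha⟩ := List.mem_flatten.1 h
  rwa [List.eq_of_mem_replicate hl] at ha

theorem append_flatten_wpow {z : List α} {w₁ w₂ : List (List α)}
    (h : z ++ w₁.flatten = w₂.flatten ++ z) (n : ℕ) :
    z ++ (wpow w₁ n).flatten = (wpow w₂ n).flatten ++ z := by
  induction n with
  | zero => simp [wpow]
  | succ n ih =>
    simp only [wpow_succ, List.flatten_append, ← List.append_assoc, h]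
    rw [List.append_assoc, ih, List.append_assoc]

theorem append_flatten_ne_of_isCode {X : Set (List α)} (hX : IsCode X)
    {z : List α} (hz : ¬ ∃ l : List (List α), (∀ a ∈ l, a ∈ X) ∧ l.flatten = z)
    {v₁ v₂ r₁ r₂ : List (List α)} (hv₁ : ∀ a ∈ v₁ ++ r₁, a ∈ X) (hv₂ : ∀ a ∈ v₂ ++ r₂, a ∈ X)
    (h : z ++ (v₁ ++ r₁).flatten = (v₂ ++ r₂).flatten ++ z) :
    z ++ v₁.flatten ≠ v₂.flatten := by
  intro hshift
  have hr : r₁.flatten = r₂.flatten ++ z := by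
    rw [List.flatten_append, List.flatten_append, ← List.append_assoc, hshift,
      List.append_assoc] at h
    exact List.append_cancel_left h
  have hX₁ : ∀ a ∈ r₁ ++ v₁, a ∈ X := fun a ha => hv₁ a (List.perm_append_comm.mem_iff.1 ha)
  have hX₂ : ∀ a ∈ r₂ ++ v₂, a ∈ X := fun a ha => hv₂ a (List.perm_append_comm.mem_iff.1 ha)
  have hfact : r₁ ++ v₁ = r₂ ++ v₂ := hX _ _ hX₁ hX₂ <| by
    rw [List.flatten_append, List.flatten_append, hr, ← hshift, List.append_assoc]
  rcases List.append_eq_append_iff.1 hfact with ⟨t, rfl, -⟩ | ⟨t, rfl, -⟩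
  · -- here `concat r₁ = concat r₁ · concat t · z`, so `z = []`
    rw [List.flatten_append, List.append_assoc, List.self_eq_append_right,
      List.append_eq_nil_iff] at hr
    exact hz ⟨[], by simp, hr.2.symm⟩
  · rw [List.flatten_append] at hr
    exact hz ⟨t, fun a ha => hX₁ a (by simp [ha]), List.append_cancel_left hr⟩

end

/-- Shifted concatenations over a code never meet: if `X` is a code,
`z ∉ ⟨X⟩` and `z · concat w₁ = concat w₂ · z`, then `z · concat v₁ ≠ concat v₂`
for all prefixes `v₁` of `w₁^n` and `v₂` of `w₂^n`. -/
theorem shift_disjoint {α : Type*} (X : Set (List α))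
    (hcode : ∀ l₁ l₂ : List (List α), (∀ a ∈ l₁, a ∈ X) → (∀ a ∈ l₂, a ∈ X) →
      l₁.flatten = l₂.flatten → l₁ = l₂)
    (w₁ w₂ : List (List α)) (hw₁ : ∀ a ∈ w₁, a ∈ X) (hw₂ : ∀ a ∈ w₂, a ∈ X)
    (z : List α) (hz : ¬ ∃ l : List (List α), (∀ a ∈ l, a ∈ X) ∧ l.flatten = z)
    (heq : z ++ w₁.flatten = w₂.flatten ++ z)
    (n : ℕ) (v₁ v₂ : List (List α))
    (hv₁ : v₁ <+: wpow w₁ n) (hv₂ : v₂ <+: wpow w₂ n) :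
    z ++ v₁.flatten ≠ v₂.flatten := by
  obtain ⟨r₁, hr₁⟩ := hv₁
  obtain ⟨r₂, hr₂⟩ := hv₂
  refine append_flatten_ne_of_isCode hcode hz (r₁ := r₁) (r₂ := r₂) ?_ ?_ ?_
  · exact fun a ha => hw₁ a (mem_of_mem_wpow (hr₁ ▸ ha))
  · exact fun a ha => hw₂ a (mem_of_mem_wpow (hr₂ ▸ ha))
  · rw [hr₁, hr₂]
    exact append_flatten_wpow heq n
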